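/- Let L ⊆ ℝⁿ be a full-rank lattice, s > 0, and let D ⊆ ℝⁿ be a measurable fundamental domain of L (the translates D + v for v ∈ L partition ℝⁿ up to measure zero). For x ∈ ℝⁿ define the function H_s(x) : ℝⁿ → ℝ by H_s(x)(z) = (s/√(2·ρ_s(L))) · (2/s)^{n/2} · ρ_{s/√2}(L + z − x). Then for all x, y ∈ ℝⁿ: ∫_D (H_s(x)(z) − H_s(y)(z))² dz = s² · (1 − ρ_s(L − (x − y))/ρ_s(L)). -/

import Mathlib

/-!
Write `H_s(x) = c · Θ_x` with `Θ_x(z) = ∑_{v ∈ L} exp(-b‖v + z - x‖²)` and `b = 2π/s²`.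
Since `Θ_x` is `L`-periodic and `Θ_y` is the sum of the `L`-translates of one Gaussian, the
integral of `Θ_x Θ_y` over the fundamental domain `D` unfolds to an integral over all of `ℝⁿ`,
and completing the square in each term gives
`∫_D Θ_x Θ_y = (π/2b)^{n/2} ρ_s(L + y - x)`.
Expanding the square then leaves `2 c² (π/2b)^{n/2} (ρ_s(L) - ρ_s(L - (x - y)))`, and the
normalisation `c` makes this `s² (1 - ρ_s(L - (x - y))/ρ_s(L))`.
-/

open Metric Submodule MeasureTheory
noncomputable section

/-- The Gaussian mass `ρ_s(A) = Σ_{a ∈ A} exp(−π‖a/s‖²)` of a set `A`. -/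
def gMass {E : Type*} [NormedAddCommGroup E] (s : ℝ) (A : Set E) : ℝ :=
  ∑' a : A, Real.exp (-Real.pi * (‖(a : E)‖ / s) ^ 2)

/-- The Gaussian embedding `H_s(x)(z) = (s/√(2ρ_s(L))) · (2/s)^{n/2} · ρ_{s/√2}(L + z − x)`. -/
def gaussEmbed {n : ℕ} (L : Submodule ℤ (EuclideanSpace ℝ (Fin n))) (s : ℝ)
    (x z : EuclideanSpace ℝ (Fin n)) : ℝ :=
  (s / Real.sqrt (2 * gMass s (L : Set (EuclideanSpace ℝ (Fin n)))))
    * (2 / s) ^ ((n : ℝ) / 2)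
    * gMass (s / Real.sqrt 2) ((fun v => v + z - x) '' (L : Set (EuclideanSpace ℝ (Fin n))))

open Real
open scoped ENNReal Nat

namespace MeasureTheory.IsAddFundamentalDomain

variable {G α : Type*} [AddGroup G] [Countable G] [AddAction G α] [MeasurableSpace α]
  [MeasurableConstVAdd G α] {μ : Measure α} [VAddInvariantMeasure G α μ] {s : Set α}

theorem setLIntegral_mul_tsum_vadd (h : IsAddFundamentalDomain G s μ) {f g : α → ℝ≥0∞}
    (hf : Measurable f) (hg : Measurable g) (hg_inv : ∀ (a : G) x, g (a +ᵥ x) = g x) :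
    ∫⁻ x in s, g x * ∑' a : G, f (a +ᵥ x) ∂μ = ∫⁻ x, g x * f x ∂μ := by
  simp only [h.lintegral_eq_tsum'', hg_inv, ← ENNReal.tsum_mul_left]
  exact lintegral_tsum fun a => (hg.mul (hf.comp (measurable_const_vadd a))).aemeasurable.restrict

end MeasureTheory.IsAddFundamentalDomain

section Gaussian

variable {V : Type*} [NormedAddCommGroup V]

def gauss (b : ℝ) (w : V) : ℝ := exp (-b * ‖w‖ ^ 2)

theorem gauss_pos (b : ℝ) (w : V) : 0 < gauss b w := exp_pos _

@[fun_prop]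
theorem continuous_gauss (b : ℝ) : Continuous (gauss b : V → ℝ) := by
  unfold gauss; fun_prop

theorem gauss_le_factorial_mul_inv_pow {b : ℝ} (hb : 0 < b) (k : ℕ) {w : V} (hw : w ≠ 0) :
    gauss b w ≤ k ! / b ^ k * ‖w‖⁻¹ ^ (2 * k) := by
  have hw' : 0 < ‖w‖ := norm_pos_iff.mpr hw
  calc gauss b w = (exp (b * ‖w‖ ^ 2))⁻¹ := by rw [gauss, neg_mul, exp_neg]
    _ ≤ ((b * ‖w‖ ^ 2) ^ k / k !)⁻¹ :=
      inv_anti₀ (by positivity) (pow_div_factorial_le_exp _ (by positivity) k)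
    _ = k ! / b ^ k * ‖w‖⁻¹ ^ (2 * k) := by
      rw [inv_div, mul_pow, ← pow_mul, inv_pow, mul_comm 2 k]; field_simp

variable [NormedSpace ℝ V] [FiniteDimensional ℝ V]

theorem summable_gauss_sub (L : Submodule ℤ V) [DiscreteTopology L] {b : ℝ} (hb : 0 < b)
    (x : V) : Summable fun v : L => gauss b ((v : V) - x) := by
  set k := Module.finrank ℤ L + 1
  refine .of_norm_bounded_eventually
    ((ZLattice.summable_norm_sub_inv_pow L (2 * k) (by omega) x).mul_left (k ! / b ^ k)) ?_
  filter_upwards [Subtype.val_injective.tendsto_cofinite.eventually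
    (Filter.eventually_cofinite_ne x)] with v hv
  rw [norm_of_nonneg (gauss_pos b _).le]
  exact gauss_le_factorial_mul_inv_pow hb k (sub_ne_zero.mpr hv)

end Gaussian

section InnerProductSpace

variable {V : Type*} [NormedAddCommGroup V] [InnerProductSpace ℝ V]

theorem gauss_sub_mul_gauss_sub (b : ℝ) (a c z : V) :
    gauss b (z - a) * gauss b (z - c)
      = gauss (b / 2) (a - c) * gauss (2 * b) (z - (2 : ℝ)⁻¹ • (a + c)) := by
  set u := z - (2 : ℝ)⁻¹ • (a + c)
  set d := (2 : ℝ)⁻¹ • (a - c)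
  have hpar : ‖u + d‖ ^ 2 + ‖u - d‖ ^ 2 = 2 * (‖u‖ ^ 2 + ‖d‖ ^ 2) := by
    simpa only [sq, mul_add] using parallelogram_law_with_norm ℝ u d
  have hd : ‖d‖ ^ 2 = ‖a - c‖ ^ 2 / 4 := by
    rw [norm_smul, mul_pow, norm_inv, Real.norm_ofNat]; ring
  rw [show z - a = u - d by module, show z - c = u + d by module]
  simp only [gauss, ← exp_add]
  congr 1
  linear_combination (-b) * hpar - 2 * b * hd

variable [FiniteDimensional ℝ V] [MeasurableSpace V] [BorelSpace V]

theorem integral_gauss {b : ℝ} (hb : 0 < b) :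
    ∫ w : V, gauss b w = (π / b) ^ (Module.finrank ℝ V / 2 : ℝ) :=
  GaussianFourier.integral_rexp_neg_mul_sq_norm hb

theorem integrable_gauss {b : ℝ} (hb : 0 < b) : Integrable (gauss b : V → ℝ) :=
  .of_integral_ne_zero <| by rw [integral_gauss hb]; positivity

theorem integrable_gauss_sub_mul_gauss_sub {b : ℝ} (hb : 0 < b) (a c : V) :
    Integrable fun z : V => gauss b (z - a) * gauss b (z - c) := by
  simp only [gauss_sub_mul_gauss_sub b a c]
  exact ((integrable_gauss (by positivity)).comp_sub_right _).const_mul _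

theorem integral_gauss_sub_mul_gauss_sub {b : ℝ} (hb : 0 < b) (a c : V) :
    ∫ z : V, gauss b (z - a) * gauss b (z - c)
      = (π / (2 * b)) ^ (Module.finrank ℝ V / 2 : ℝ) * gauss (b / 2) (a - c) := by
  simp only [gauss_sub_mul_gauss_sub b a c]
  rw [integral_const_mul, integral_sub_right_eq_self (gauss (2 * b)),
    integral_gauss (by positivity), mul_comm]

end InnerProductSpace

section Periodization

variable {V : Type*} [NormedAddCommGroup V] (L : Submodule ℤ V)

def periodicGauss (b : ℝ) (x z : V) : ℝ := ∑' v : L, gauss b ((v : V) + z - x)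

variable {L} {b : ℝ}

theorem periodicGauss_nonneg (x z : V) : 0 ≤ periodicGauss L b x z :=
  tsum_nonneg fun _ => (gauss_pos b _).le

theorem periodicGauss_self (x : V) :
    periodicGauss L b x x = ∑' v : L, gauss b (v : V) := by
  simp only [periodicGauss, add_sub_cancel_right]

theorem periodicGauss_add_right (x z : V) (w : L) :
    periodicGauss L b x ((w : V) + z) = periodicGauss L b x z :=
  calc periodicGauss L b x ((w : V) + z)
      = ∑' v : L, (fun u : L => gauss b ((u : V) + z - x)) (v + w) := by
        simp only [periodicGauss, Submodule.coe_add, add_assoc]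
    _ = periodicGauss L b x z :=
        (Equiv.addRight w).tsum_eq fun u : L => gauss b ((u : V) + z - x)

variable [NormedSpace ℝ V] [FiniteDimensional ℝ V] [DiscreteTopology L]

instance : Countable L := countable_of_Lindelof_of_discrete

theorem summable_gauss_add_sub (hb : 0 < b) (x z : V) :
    Summable fun v : L => gauss b ((v : V) + z - x) := by
  simpa only [sub_sub_eq_add_sub] using summable_gauss_sub L hb (x - z)

theorem ofReal_periodicGauss (hb : 0 < b) (x z : V) :
    ENNReal.ofReal (periodicGauss L b x z) = ∑' v : L, ENNReal.ofReal (gauss b ((v : V) + z - x)) :=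
  ENNReal.ofReal_tsum_of_nonneg (fun _ => (gauss_pos b _).le) (summable_gauss_add_sub hb x z)

theorem periodicGauss_pos (hb : 0 < b) (x z : V) : 0 < periodicGauss L b x z :=
  (summable_gauss_add_sub hb x z).tsum_pos (fun _ => (gauss_pos b _).le) 0 (gauss_pos b _)

variable [MeasurableSpace V] [BorelSpace V]

theorem measurable_ofReal_periodicGauss (hb : 0 < b) (x : V) :
    Measurable fun z => ENNReal.ofReal (periodicGauss L b x z) := by
  simp only [ofReal_periodicGauss hb]
  exact .tsum fun v => by fun_prop

end Periodization

section FundamentalDomain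

variable {V : Type*} [NormedAddCommGroup V] [InnerProductSpace ℝ V] [FiniteDimensional ℝ V]
  [MeasurableSpace V] [BorelSpace V] {L : Submodule ℤ V} [DiscreteTopology L] {D : Set V} {b : ℝ}

theorem setLIntegral_ofReal_periodicGauss_mul (hD : IsAddFundamentalDomain L.toAddSubgroup D)
    (hb : 0 < b) (x y : V) :
    ∫⁻ z in D, ENNReal.ofReal (periodicGauss L b x z) * ENNReal.ofReal (periodicGauss L b y z)
      = ENNReal.ofReal ((π / (2 * b)) ^ (Module.finrank ℝ V / 2 : ℝ)
          * periodicGauss L (b / 2) x y) := by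
  have : Countable L.toAddSubgroup := inferInstanceAs (Countable L)
  have hmeas : Measurable fun z : V => ENNReal.ofReal (gauss b (z - y)) := by fun_prop
  calc ∫⁻ z in D, ENNReal.ofReal (periodicGauss L b x z) * ENNReal.ofReal (periodicGauss L b y z)
      = ∫⁻ z in D, ENNReal.ofReal (periodicGauss L b x z)
          * ∑' v : L.toAddSubgroup, ENNReal.ofReal (gauss b ((v +ᵥ z) - y)) := by
        -- `L.toAddSubgroup` has the elements of `L`, and `v +ᵥ z = v + z`
        simp only [ofReal_periodicGauss hb y]; rfl
    _ = ∫⁻ z, ENNReal.ofReal (periodicGauss L b x z) * ENNReal.ofReal (gauss b (z - y)) :=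
        hD.setLIntegral_mul_tsum_vadd hmeas (measurable_ofReal_periodicGauss hb x)
          fun w z => congrArg ENNReal.ofReal (periodicGauss_add_right x z ⟨w, w.2⟩)
    _ = ∑' w : L, ∫⁻ z, ENNReal.ofReal (gauss b (z - y) * gauss b (z - (x - w))) := by
        simp only [ofReal_periodicGauss hb x, ← ENNReal.tsum_mul_right]
        rw [lintegral_tsum fun w => by fun_prop]
        refine tsum_congr fun w => lintegral_congr fun z => ?_
        rw [ENNReal.ofReal_mul (gauss_pos b _).le, mul_comm, sub_sub_eq_add_sub, add_comm z]
    _ = ∑' w : L, ENNReal.ofReal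
          ((π / (2 * b)) ^ (Module.finrank ℝ V / 2 : ℝ) * gauss (b / 2) ((w : V) + y - x)) := by
        refine tsum_congr fun w => ?_
        rw [← ofReal_integral_eq_lintegral_ofReal (integrable_gauss_sub_mul_gauss_sub hb _ _)
          (.of_forall fun z => (mul_pos (gauss_pos b _) (gauss_pos b _)).le),
          integral_gauss_sub_mul_gauss_sub hb, sub_sub_eq_add_sub, add_comm y]
    _ = _ := by
        rw [← ENNReal.ofReal_tsum_of_nonneg
          (fun w => mul_nonneg (by positivity) (gauss_pos _ _).le)
          ((summable_gauss_add_sub (half_pos hb) x y).mul_left _), tsum_mul_left, periodicGauss]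

theorem integrableOn_periodicGauss_mul_and_setIntegral_eq
    (hD : IsAddFundamentalDomain L.toAddSubgroup D) (hb : 0 < b) (x y : V) :
    IntegrableOn (fun z => periodicGauss L b x z * periodicGauss L b y z) D ∧
      ∫ z in D, periodicGauss L b x z * periodicGauss L b y z
        = (π / (2 * b)) ^ (Module.finrank ℝ V / 2 : ℝ) * periodicGauss L (b / 2) x y := by
  set F := fun z =>
    ENNReal.ofReal (periodicGauss L b x z) * ENNReal.ofReal (periodicGauss L b y z)
  have hF_meas : Measurable F :=
    (measurable_ofReal_periodicGauss hb x).mul (measurable_ofReal_periodicGauss hb y)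
  have hF_fin : ∫⁻ z in D, F z ≠ ⊤ := by
    rw [setLIntegral_ofReal_periodicGauss_mul hD hb]; exact ENNReal.ofReal_ne_top
  have hF_toReal :
      (fun z => periodicGauss L b x z * periodicGauss L b y z) = fun z => (F z).toReal := by
    ext z
    rw [ENNReal.toReal_mul, ENNReal.toReal_ofReal (periodicGauss_nonneg x z),
      ENNReal.toReal_ofReal (periodicGauss_nonneg y z)]
  rw [hF_toReal]
  refine ⟨integrable_toReal_of_lintegral_ne_top hF_meas.aemeasurable hF_fin, ?_⟩
  rw [integral_toReal hF_meas.aemeasurable (ae_lt_top hF_meas hF_fin),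
    setLIntegral_ofReal_periodicGauss_mul hD hb, ENNReal.toReal_ofReal
      (mul_nonneg (by positivity) (periodicGauss_nonneg _ _))]

theorem setIntegral_periodicGauss_sub_sq (hD : IsAddFundamentalDomain L.toAddSubgroup D)
    (hb : 0 < b) (x y : V) :
    ∫ z in D, (periodicGauss L b x z - periodicGauss L b y z) ^ 2
      = 2 * (π / (2 * b)) ^ (Module.finrank ℝ V / 2 : ℝ)
          * (∑' v : L, gauss (b / 2) (v : V) - periodicGauss L (b / 2) x y) := by
  obtain ⟨hxx, hIxx⟩ := integrableOn_periodicGauss_mul_and_setIntegral_eq hD hb x x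
  obtain ⟨hxy, hIxy⟩ := integrableOn_periodicGauss_mul_and_setIntegral_eq hD hb x y
  obtain ⟨hyy, hIyy⟩ := integrableOn_periodicGauss_mul_and_setIntegral_eq hD hb y y
  have hexpand : ∀ z, (periodicGauss L b x z - periodicGauss L b y z) ^ 2
      = (periodicGauss L b x z * periodicGauss L b x z
          - periodicGauss L b x z * periodicGauss L b y z)
        - (periodicGauss L b x z * periodicGauss L b y z
          - periodicGauss L b y z * periodicGauss L b y z) := fun z => by ring
  simp only [hexpand]
  rw [integral_sub, integral_sub hxx hxy, integral_sub hxy hyy,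
    hIxx, hIxy, hIyy, periodicGauss_self, periodicGauss_self]
  · ring
  · exact hxx.sub hxy
  · exact hxy.sub hyy

end FundamentalDomain

section GaussianMass

variable {E : Type*} [NormedAddCommGroup E]

theorem gMass_eq_tsum_gauss (t : ℝ) (A : Set E) :
    gMass t A = ∑' a : A, gauss (π / t ^ 2) (a : E) :=
  tsum_congr fun a => by rw [gauss, div_pow]; ring_nf

theorem gMass_image_eq_tsum_gauss (t : ℝ) {f : E → E} (hf : Function.Injective f) (A : Set E) :
    gMass t (f '' A) = ∑' a : A, gauss (π / t ^ 2) (f a) := by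
  rw [gMass_eq_tsum_gauss, ← (Equiv.Set.image f A hf).tsum_eq]
  rfl

theorem gMass_image_sub_eq_periodicGauss (L : Submodule ℤ E) (s : ℝ) (x y : E) :
    gMass s ((fun v => v - (x - y)) '' (L : Set E)) = periodicGauss L (π / s ^ 2) x y := by
  rw [gMass_image_eq_tsum_gauss _ fun a b h => by simpa using h]
  simp only [sub_sub_eq_add_sub]
  rfl

end GaussianMass

theorem gaussEmbed_eq_mul_periodicGauss {n : ℕ} (L : Submodule ℤ (EuclideanSpace ℝ (Fin n)))
    (s : ℝ) (x z : EuclideanSpace ℝ (Fin n)) :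
    gaussEmbed L s x z = s / √(2 * gMass s (L : Set (EuclideanSpace ℝ (Fin n))))
      * (2 / s) ^ ((n : ℝ) / 2) * periodicGauss L (2 * (π / s ^ 2)) x z := by
  have hscale : π / (s / √2) ^ 2 = 2 * (π / s ^ 2) := by
    rw [div_pow, sq_sqrt zero_le_two]; ring
  rw [gaussEmbed, gMass_image_eq_tsum_gauss _ fun a b h => by simpa using h, hscale]
  rfl

theorem gaussEmbed_const_sq_mul {s : ℝ} (hs : 0 < s) (k : ℝ) {G : ℝ} (hG : 0 ≤ G) :
    (s / √(2 * G)) ^ 2 * ((2 / s) ^ (k / 2)) ^ 2 * (π / (2 * (2 * (π / s ^ 2)))) ^ (k / 2)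
      = s ^ 2 / (2 * G) := by
  rw [div_pow, sq_sqrt (by positivity), mul_assoc, Real.rpow_pow_comm (by positivity),
    ← Real.mul_rpow (by positivity) (by positivity)]
  convert mul_one _ using 2
  convert Real.one_rpow _ using 2
  field_simp

theorem gaussEmbed_dist_sq
    (n : ℕ)
    (L : Submodule ℤ (EuclideanSpace ℝ (Fin n))) [DiscreteTopology L]
    (s : ℝ) (hs : 0 < s)
    (D : Set (EuclideanSpace ℝ (Fin n)))
    (hD : MeasureTheory.IsAddFundamentalDomain L.toAddSubgroup D MeasureTheory.volume)
    (x y : EuclideanSpace ℝ (Fin n)) :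
    ∫ z in D, (gaussEmbed L s x z - gaussEmbed L s y z) ^ 2
      = s ^ 2 * (1 - gMass s ((fun v => v - (x - y)) '' (L : Set (EuclideanSpace ℝ (Fin n))))
            / gMass s (L : Set (EuclideanSpace ℝ (Fin n)))) := by
  have hGxy := gMass_image_sub_eq_periodicGauss L s x y
  set Gxy := gMass s ((fun v => v - (x - y)) '' (L : Set (EuclideanSpace ℝ (Fin n))))
  set G := gMass s (L : Set (EuclideanSpace ℝ (Fin n)))
  have hG : G = ∑' v : L, gauss (π / s ^ 2) (v : EuclideanSpace ℝ (Fin n)) :=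
    gMass_eq_tsum_gauss s _
  have hG_pos : 0 < G := by
    rw [hG, ← periodicGauss_self 0]
    exact periodicGauss_pos (by positivity) 0 0
  simp only [gaussEmbed_eq_mul_periodicGauss, ← mul_sub, mul_pow]
  rw [integral_const_mul, setIntegral_periodicGauss_sub_sq hD (by positivity),
    mul_div_cancel_left₀ _ two_ne_zero, finrank_euclideanSpace_fin, ← hG, ← hGxy]
  calc _ = (s / √(2 * G)) ^ 2 * ((2 / s) ^ ((n : ℝ) / 2)) ^ 2
          * (π / (2 * (2 * (π / s ^ 2)))) ^ ((n : ℝ) / 2) * (2 * (G - Gxy)) := by ring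
    _ = s ^ 2 * (1 - Gxy / G) := by
      rw [gaussEmbed_const_sq_mul hs _ hG_pos.le]; field_simp
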